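/- arXiv:1305.0962 — 11 statements merged into one kernel-verified Lean document; each statement's English description precedes it below -/
import Mathlib

section
/- If γ : ℝ → M₂ is C¹, then the Märzke-Wheeler map Ω_γ satisfies the M₂-holomorphy (Cauchy-Riemann-type) equation ∂₀Ω_γ = σ · ∂₁Ω_γ, where ∂₀ is the derivative in the time coordinate s and ∂₁ in the space coordinate x. -/
/-- Märzke-Wheeler map of a curve γ : ℝ → M₂, at the point s + xσ (time s, space x):
Ω_γ(s + xσ) = (γ(s+x) + γ(s−x))/2 + ((γ(s+x) − γ(s−x))/2)·σ,
where multiplication by σ swaps the two real coordinates. -/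
noncomputable def Omega (γ : ℝ → ℝ × ℝ) (p : ℝ × ℝ) : ℝ × ℝ :=
  ((γ (p.1 + p.2)).1 / 2 + (γ (p.1 - p.2)).1 / 2 + ((γ (p.1 + p.2)).2 / 2 - (γ (p.1 - p.2)).2 / 2),
   (γ (p.1 + p.2)).2 / 2 + (γ (p.1 - p.2)).2 / 2 + ((γ (p.1 + p.2)).1 / 2 - (γ (p.1 - p.2)).1 / 2))

/-- Partial derivative in the first (time) coordinate. -/
noncomputable def pd0 (F : ℝ × ℝ → ℝ × ℝ) (p : ℝ × ℝ) : ℝ × ℝ :=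
  deriv (fun s => F (s, p.2)) p.1

/-- Partial derivative in the second (space) coordinate. -/
noncomputable def pd1 (F : ℝ × ℝ → ℝ × ℝ) (p : ℝ × ℝ) : ℝ × ℝ :=
  deriv (fun x => F (p.1, x)) p.2

/-! Ω_γ(s + xσ) is `(u + v + σ(u - v))/2` with `u = γ(s + x)`, `v = γ(s - x)`. By the chain rule
∂₀Ω_γ and ∂₁Ω_γ are the same expression in `γ'(s + x)` and `γ'(s - x)`, except that `γ'(s - x)`
enters ∂₁ with a minus sign; and flipping the sign of `v` in `(u + v + σ(u - v))/2` is the same as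
multiplying by σ, since σ² = 1. -/

section OmegaCombine

variable {E : Type*} [NormedAddCommGroup E] [NormedSpace ℝ E]

noncomputable def omegaCombine (u v : E × E) : E × E :=
  (2 : ℝ)⁻¹ • (u + v + (u - v).swap)

theorem omega_eq_omegaCombine (γ : ℝ → ℝ × ℝ) (p : ℝ × ℝ) :
    Omega γ p = omegaCombine (γ (p.1 + p.2)) (γ (p.1 - p.2)) := by
  ext <;> simp only [Omega, omegaCombine, Prod.smul_fst, Prod.smul_snd, Prod.fst_add,
    Prod.snd_add, Prod.fst_swap, Prod.snd_swap, Prod.fst_sub, Prod.snd_sub, smul_eq_mul] <;> ring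

theorem swap_omegaCombine_neg (u v : E × E) :
    (omegaCombine u (-v)).swap = omegaCombine u v := by
  rw [omegaCombine, omegaCombine, Prod.smul_swap, Prod.swap_add, Prod.swap_swap, Prod.swap_add,
    sub_neg_eq_add, Prod.swap_neg, Prod.swap_sub, ← sub_eq_add_neg]
  congr 1
  abel

theorem HasDerivAt.prodSwap {F : Type*} [NormedAddCommGroup F] [NormedSpace ℝ F]
    {f : ℝ → E × F} {f' : E × F} {t : ℝ} (hf : HasDerivAt f f' t) :
    HasDerivAt (fun t => (f t).swap) f'.swap t :=
  (ContinuousLinearEquiv.prodComm ℝ E F).hasFDerivAt.comp_hasDerivAt t hf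

theorem HasDerivAt.omegaCombine {f g : ℝ → E × E} {f' g' : E × E} {t : ℝ}
    (hf : HasDerivAt f f' t) (hg : HasDerivAt g g' t) :
    HasDerivAt (fun t => omegaCombine (f t) (g t)) (omegaCombine f' g') t :=
  ((hf.add hg).add (hf.sub hg).prodSwap).const_smul (2 : ℝ)⁻¹

end OmegaCombine

section Partials

variable {γ : ℝ → ℝ × ℝ} {s x : ℝ}

theorem hasDerivAt_omega_time (hplus : DifferentiableAt ℝ γ (s + x))
    (hminus : DifferentiableAt ℝ γ (s - x)) :
    HasDerivAt (fun s => Omega γ (s, x))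
      (omegaCombine (deriv γ (s + x)) (deriv γ (s - x))) s := by
  simp only [omega_eq_omegaCombine]
  exact (hplus.hasDerivAt.comp_add_const s x).omegaCombine
    (hminus.hasDerivAt.comp_sub_const s x)

theorem hasDerivAt_omega_space (hplus : DifferentiableAt ℝ γ (s + x))
    (hminus : DifferentiableAt ℝ γ (s - x)) :
    HasDerivAt (fun x => Omega γ (s, x))
      (omegaCombine (deriv γ (s + x)) (-deriv γ (s - x))) x := by
  simp only [omega_eq_omegaCombine]
  exact (hplus.hasDerivAt.comp_const_add s x).omegaCombine
    (hminus.hasDerivAt.comp_const_sub s x)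

end Partials

/-- For a C¹ curve γ, the Märzke-Wheeler map satisfies ∂₀Ω_γ = σ·∂₁Ω_γ
(multiplication by σ swaps the two coordinates). -/
theorem omega_holomorphic (γ : ℝ → ℝ × ℝ) (hγ : ContDiff ℝ 1 γ) (p : ℝ × ℝ) :
    pd0 (Omega γ) p = ((pd1 (Omega γ) p).2, (pd1 (Omega γ) p).1) := by
  have hγ' : Differentiable ℝ γ := hγ.differentiable one_ne_zero
  rw [pd0, pd1, (hasDerivAt_omega_time (hγ' _) (hγ' _)).deriv,
    (hasDerivAt_omega_space (hγ' _) (hγ' _)).deriv, ← swap_omegaCombine_neg]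
  rfl
end

section
/- Let F : M₂ → M₂ be differentiable and M₂-holomorphic, i.e., ∂₀F = σ·∂₁F. Then for all i, j ∈ {0,1}, ⟨∂ᵢF(p), ∂ⱼF(p)⟩ = |DF(p)|²_L · η_{ij}, where DF = ∂₀F, η₀₀ = 1, η₁₁ = −1, η₀₁ = η₁₀ = 0, and ⟨a, b⟩ = Π⁰(a*·b) is the Minkowski inner product. In particular F is a conformal map with conformal factor |DF|²_L. -/
/-- Split-complex multiplication on ℝ × ℝ: (a + bσ)(c + dσ) = (ac+bd) + (ad+bc)σ. -/
def scMul (z w : ℝ × ℝ) : ℝ × ℝ := (z.1 * w.1 + z.2 * w.2, z.1 * w.2 + z.2 * w.1)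

/-- Conjugation (a + bσ)* = a − bσ. -/
def scConj (z : ℝ × ℝ) : ℝ × ℝ := (z.1, -z.2)

/-- Minkowski quadratic form |a + bσ|²_L = a² − b². -/
def qL (z : ℝ × ℝ) : ℝ := z.1 ^ 2 - z.2 ^ 2

/-- Indexed partial derivative: i = 0 is the time direction, i = 1 the space direction. -/
noncomputable def pd (i : Fin 2) (F : ℝ × ℝ → ℝ × ℝ) (p : ℝ × ℝ) : ℝ × ℝ :=
  if i = 0 then pd0 F p else pd1 F p

/-- The Minkowski inner product ⟨a+bσ, c+dσ⟩ = ac − bd. -/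
def minkInner (z w : ℝ × ℝ) : ℝ := z.1 * w.1 - z.2 * w.2

/-- The Minkowski metric η. -/
def eta (i j : Fin 2) : ℝ := if i = j then (if i = 0 then 1 else -1) else 0

/-- A differentiable M₂-holomorphic map is conformal with conformal factor |DF|²_L:
⟨∂ᵢF, ∂ⱼF⟩ = |∂₀F|²_L · η_{ij}. -/
theorem holomorphic_conformal (F : ℝ × ℝ → ℝ × ℝ) (hF : Differentiable ℝ F)
    (hol : ∀ p, pd0 F p = ((pd1 F p).2, (pd1 F p).1)) (p : ℝ × ℝ) (i j : Fin 2) :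
    minkInner (pd i F p) (pd j F p) = qL (pd0 F p) * eta i j := by
  have h := hol p
  fin_cases i <;> fin_cases j <;>
    simp [pd, minkInner, qL, eta, h] <;> ring
end

section
/- If γ : ℝ → M₂ is an observer (i.e., γ(t) − γ(s) is future-directed timelike whenever t > s), then the Märzke-Wheeler map Ω_γ is a causal morphism: x < y implies Ω_γ(x) < Ω_γ(y), where x < y means y − x is a future-directed null vector. -/
/-- v is future-directed timelike: time component exceeds |space component|. -/
def FDT (v : ℝ × ℝ) : Prop := |v.2| < v.1

/-- v is future-directed null. -/
def FDN (v : ℝ × ℝ) : Prop := v.1 = |v.2| ∧ v ≠ 0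

/-- An observer's Märzke-Wheeler map is a causal morphism: it preserves the
causal relation x < y (y − x future-directed null). -/
theorem omega_causal_morphism (γ : ℝ → ℝ × ℝ) (hcont : Continuous γ)
    (hobs : ∀ s t : ℝ, s < t → FDT (γ t - γ s)) (x y : ℝ × ℝ) (h : FDN (y - x)) :
    FDN (Omega γ y - Omega γ x) := by
  obtain ⟨h1, h2⟩ := h
  have hx1 : (y - x).1 = y.1 - x.1 := rfl
  have hx2 : (y - x).2 = y.2 - x.2 := rfl
  rw [hx1, hx2] at h1
  have hd : y.2 - x.2 ≠ 0 := by
    intro hz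
    apply h2
    have : y.1 - x.1 = 0 := by rw [h1, hz, abs_zero]
    have h1' : y.1 = x.1 := by linarith
    have h2' : y.2 = x.2 := by linarith [hz]
    ext <;> simp [h1', h2']
  unfold Omega FDN
  rcases lt_or_gt_of_ne hd with hneg | hpos
  · -- d < 0 : y.1 - y.2 > x.1 - x.2, sums equal
    have habs : y.1 - x.1 = -(y.2 - x.2) := by rw [h1, abs_of_neg hneg]
    have hsum : y.1 + y.2 = x.1 + x.2 := by linarith
    have hdiff : x.1 - x.2 < y.1 - y.2 := by linarith
    have hb := hobs _ _ hdiff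
    set b : ℝ × ℝ := γ (y.1 - y.2) - γ (x.1 - x.2) with hbdef
    have hb1 : (γ (y.1 - y.2)).1 - (γ (x.1 - x.2)).1 = b.1 := rfl
    have hb2 : (γ (y.1 - y.2)).2 - (γ (x.1 - x.2)).2 = b.2 := rfl
    have hbt : |b.2| < b.1 := hb
    have hbpos : 0 < b.1 - b.2 := by
      have := abs_lt.mp hbt
      linarith [this.1, this.2]
    constructor
    · show _ = |_|
      simp only [Prod.fst_sub, Prod.snd_sub]
      have e1 : (γ (y.1 + y.2)).1 / 2 + (γ (y.1 - y.2)).1 / 2 +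
          ((γ (y.1 + y.2)).2 / 2 - (γ (y.1 - y.2)).2 / 2) -
          ((γ (x.1 + x.2)).1 / 2 + (γ (x.1 - x.2)).1 / 2 +
          ((γ (x.1 + x.2)).2 / 2 - (γ (x.1 - x.2)).2 / 2)) = (b.1 - b.2) / 2 := by
        rw [hsum, hbdef]; simp [Prod.fst_sub, Prod.snd_sub]; ring
      have e2 : (γ (y.1 + y.2)).2 / 2 + (γ (y.1 - y.2)).2 / 2 +
          ((γ (y.1 + y.2)).1 / 2 - (γ (y.1 - y.2)).1 / 2) -
          ((γ (x.1 + x.2)).2 / 2 + (γ (x.1 - x.2)).2 / 2 +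
          ((γ (x.1 + x.2)).1 / 2 - (γ (x.1 - x.2)).1 / 2)) = (b.2 - b.1) / 2 := by
        rw [hsum, hbdef]; simp [Prod.fst_sub, Prod.snd_sub]; ring
      rw [e1, e2, abs_of_neg (by linarith : (b.2 - b.1)/2 < 0)]
      ring
    · intro hz
      have hz1 := congrArg Prod.fst hz
      simp only [Prod.fst_sub, Prod.fst_zero, hsum] at hz1
      have : (b.1 - b.2) / 2 = 0 := by
        rw [← hz1, hbdef]; simp [Prod.fst_sub, Prod.snd_sub, sub_eq_zero]; ring
      linarith
  · -- d > 0
    have habs : y.1 - x.1 = y.2 - x.2 := by rw [h1, abs_of_pos hpos]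
    have hdiff : y.1 - y.2 = x.1 - x.2 := by linarith
    have hsum : x.1 + x.2 < y.1 + y.2 := by linarith
    have hb := hobs _ _ hsum
    set b : ℝ × ℝ := γ (y.1 + y.2) - γ (x.1 + x.2) with hbdef
    have hbt : |b.2| < b.1 := hb
    have hbpos : 0 < b.1 + b.2 := by
      have := abs_lt.mp hbt
      linarith [this.1, this.2]
    constructor
    · show _ = |_|
      simp only [Prod.fst_sub, Prod.snd_sub]
      have e1 : (γ (y.1 + y.2)).1 / 2 + (γ (y.1 - y.2)).1 / 2 +
          ((γ (y.1 + y.2)).2 / 2 - (γ (y.1 - y.2)).2 / 2) -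
          ((γ (x.1 + x.2)).1 / 2 + (γ (x.1 - x.2)).1 / 2 +
          ((γ (x.1 + x.2)).2 / 2 - (γ (x.1 - x.2)).2 / 2)) = (b.1 + b.2) / 2 := by
        rw [hdiff, hbdef]; simp [Prod.fst_sub, Prod.snd_sub]; ring
      have e2 : (γ (y.1 + y.2)).2 / 2 + (γ (y.1 - y.2)).2 / 2 +
          ((γ (y.1 + y.2)).1 / 2 - (γ (y.1 - y.2)).1 / 2) -
          ((γ (x.1 + x.2)).2 / 2 + (γ (x.1 - x.2)).2 / 2 +
          ((γ (x.1 + x.2)).1 / 2 - (γ (x.1 - x.2)).1 / 2)) = (b.1 + b.2) / 2 := by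
        rw [hdiff, hbdef]; simp [Prod.fst_sub, Prod.snd_sub]; ring
      rw [e1, e2, abs_of_pos (by linarith : (0:ℝ) < (b.1 + b.2)/2)]
    · intro hz
      have hz1 := congrArg Prod.fst hz
      simp only [Prod.fst_sub, Prod.fst_zero] at hz1
      have : (b.1 + b.2) / 2 = 0 := by
        rw [← hz1, hdiff, hbdef]; simp [Prod.fst_sub, Prod.snd_sub, sub_eq_zero]; ring
      linarith
end

section
/- If γ : ℝ → M₂ is an observer, then for fixed x the map s ↦ Ω_γ(s + xσ) is strictly chronological: for t > s, Ω_γ(t + xσ) − Ω_γ(s + xσ) is future-directed timelike. -/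
/-- For an observer γ and fixed space coordinate x, the map s ↦ Ω_γ(s + xσ) is
strictly chronological. -/
theorem omega_chronological (γ : ℝ → ℝ × ℝ) (hcont : Continuous γ)
    (hobs : ∀ s t : ℝ, s < t → FDT (γ t - γ s)) (x s t : ℝ) (h : s < t) :
    FDT (Omega γ (t, x) - Omega γ (s, x)) := by
  have ha := hobs (s + x) (t + x) (by linarith)
  have hb := hobs (s - x) (t - x) (by linarith)
  simp only [FDT, abs_lt, Prod.fst_sub, Prod.snd_sub] at ha hb
  simp only [FDT, Omega, abs_lt, Prod.fst_sub, Prod.snd_sub]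
  constructor <;> linarith [ha.1, ha.2, hb.1, hb.2]
end

section
/- Every causal automorphism F of M₂ has a continuous associated curve: if F : M₂ → M₂ is a bijection such that F and F⁻¹ both preserve the chronological order ≪, then s ↦ F(s, 0) is continuous. -/
/-- Chronological precedence: x ≪ y iff y − x is future-directed timelike. -/
def Chron (x y : ℝ × ℝ) : Prop := |y.2 - x.2| < y.1 - x.1

/-- The associated curve of a causal automorphism is continuous. -/
theorem associated_curve_continuous (F : ℝ × ℝ → ℝ × ℝ) (hbij : Function.Bijective F)
    (hF : ∀ x y, Chron x y → Chron (F x) (F y))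
    (hFinv : ∀ x y, Chron (F x) (F y) → Chron x y) :
    Continuous (fun s : ℝ => F (s, 0)) := by
  obtain ⟨hinj, hsurj⟩ := hbij
  obtain ⟨p, hp⟩ : ∃ p : ℝ → ℝ, ∀ s, p s = (F (s, 0)).1 + (F (s, 0)).2 := ⟨_, fun s => rfl⟩
  obtain ⟨q, hq⟩ : ∃ q : ℝ → ℝ, ∀ s, q s = (F (s, 0)).1 - (F (s, 0)).2 := ⟨_, fun s => rfl⟩
  -- Chron in null coordinates
  have hchron : ∀ a b : ℝ × ℝ, Chron a b ↔ (a.1 + a.2 < b.1 + b.2 ∧ a.1 - a.2 < b.1 - b.2) := by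
    intro a b
    unfold Chron
    rw [abs_lt]
    constructor
    · rintro ⟨h1, h2⟩; constructor <;> linarith
    · rintro ⟨h1, h2⟩; constructor <;> linarith
  have hdiag : ∀ s t : ℝ, s < t → Chron (s, 0) (t, 0) := by
    intro s t hst
    unfold Chron
    simpa using hst
  have hpq : ∀ s t, s < t → p s < p t ∧ q s < q t := by
    intro s t hst
    have h := (hchron _ _).1 (hF _ _ (hdiag s t hst))
    rw [hp s, hp t, hq s, hq t]
    exact h
  -- Key squeeze lemma: a point strictly order-between the curve on both sides
  -- of s₀ must be exactly F (s₀, 0).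
  have key : ∀ (s₀ c d : ℝ), (∀ s, s < s₀ → p s < c ∧ q s < d) →
      (∀ t, s₀ < t → c < p t ∧ d < q t) → c = p s₀ ∧ d = q s₀ := by
    intro s₀ c d hlo hhi
    obtain ⟨z, hz⟩ := hsurj ((c + d) / 2, (c - d) / 2)
    have hzlo : ∀ s, s < s₀ → s < z.1 + z.2 ∧ s < z.1 - z.2 := by
      intro s hs
      have h1 : Chron (F (s, 0)) (F z) := by
        rw [hz, hchron]
        have h2 := (hlo s hs).1
        have h3 := (hlo s hs).2
        rw [hp s] at h2
        rw [hq s] at h3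
        constructor <;> simp <;> linarith
      have h4 := (hchron _ _).1 (hFinv _ _ h1)
      simp only at h4
      constructor <;> linarith [h4.1, h4.2]
    have hzhi : ∀ t, s₀ < t → z.1 + z.2 < t ∧ z.1 - z.2 < t := by
      intro t ht
      have h1 : Chron (F z) (F (t, 0)) := by
        rw [hz, hchron]
        have h2 := (hhi t ht).1
        have h3 := (hhi t ht).2
        rw [hp t] at h2
        rw [hq t] at h3
        constructor <;> simp <;> linarith
      have h4 := (hchron _ _).1 (hFinv _ _ h1)
      simp only at h4
      constructor <;> linarith [h4.1, h4.2]
    have e1 : z.1 + z.2 = s₀ := by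
      by_contra h
      rcases lt_or_gt_of_ne h with h' | h'
      · have := (hzlo ((z.1 + z.2 + s₀) / 2) (by linarith)).1; linarith
      · have := (hzhi ((z.1 + z.2 + s₀) / 2) (by linarith)).1; linarith
    have e2 : z.1 - z.2 = s₀ := by
      by_contra h
      rcases lt_or_gt_of_ne h with h' | h'
      · have := (hzlo ((z.1 - z.2 + s₀) / 2) (by linarith)).2; linarith
      · have := (hzhi ((z.1 - z.2 + s₀) / 2) (by linarith)).2; linarith
    have hz1 : z.1 = s₀ := by linarith
    have hz2 : z.2 = 0 := by linarith
    have hzval : z = (s₀, (0 : ℝ)) := Prod.ext hz1 hz2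
    rw [hzval] at hz
    constructor
    · rw [hp s₀, hz]; show c = (c + d) / 2 + (c - d) / 2; ring
    · rw [hq s₀, hz]; show d = (c + d) / 2 - (c - d) / 2; ring
  -- approach lemmas
  have left_p : ∀ s₀ ε : ℝ, 0 < ε → ∃ s₁, s₁ < s₀ ∧ p s₀ - ε < p s₁ := by
    intro s₀ ε hε
    by_contra h
    push_neg at h
    have hk := key s₀ (p s₀ - ε / 2) (q s₀)
      (fun s hs => ⟨by linarith [h s hs], (hpq s s₀ hs).2⟩)
      (fun t ht => ⟨by linarith [(hpq s₀ t ht).1], (hpq s₀ t ht).2⟩)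
    linarith [hk.1]
  have right_p : ∀ s₀ ε : ℝ, 0 < ε → ∃ t₁, s₀ < t₁ ∧ p t₁ < p s₀ + ε := by
    intro s₀ ε hε
    by_contra h
    push_neg at h
    have hk := key s₀ (p s₀ + ε / 2) (q s₀)
      (fun s hs => ⟨by linarith [(hpq s s₀ hs).1], (hpq s s₀ hs).2⟩)
      (fun t ht => ⟨by linarith [h t ht], (hpq s₀ t ht).2⟩)
    linarith [hk.1]
  have left_q : ∀ s₀ ε : ℝ, 0 < ε → ∃ s₁, s₁ < s₀ ∧ q s₀ - ε < q s₁ := by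
    intro s₀ ε hε
    by_contra h
    push_neg at h
    have hk := key s₀ (p s₀) (q s₀ - ε / 2)
      (fun s hs => ⟨(hpq s s₀ hs).1, by linarith [h s hs]⟩)
      (fun t ht => ⟨(hpq s₀ t ht).1, by linarith [(hpq s₀ t ht).2]⟩)
    linarith [hk.2]
  have right_q : ∀ s₀ ε : ℝ, 0 < ε → ∃ t₁, s₀ < t₁ ∧ q t₁ < q s₀ + ε := by
    intro s₀ ε hε
    by_contra h
    push_neg at h
    have hk := key s₀ (p s₀) (q s₀ + ε / 2)
      (fun s hs => ⟨(hpq s s₀ hs).1, by linarith [(hpq s s₀ hs).2]⟩)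
      (fun t ht => ⟨(hpq s₀ t ht).1, by linarith [h t ht]⟩)
    linarith [hk.2]
  -- a strictly increasing function with these approach properties is continuous
  have cont_of : ∀ f : ℝ → ℝ, (∀ s t, s < t → f s < f t) →
      (∀ s₀ ε : ℝ, 0 < ε → ∃ s₁, s₁ < s₀ ∧ f s₀ - ε < f s₁) →
      (∀ s₀ ε : ℝ, 0 < ε → ∃ t₁, s₀ < t₁ ∧ f t₁ < f s₀ + ε) → Continuous f := by
    intro f hmono hleft hright
    rw [Metric.continuous_iff]
    intro s₀ ε hε
    obtain ⟨s₁, hs₁, hfs₁⟩ := hleft s₀ ε hε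
    obtain ⟨t₁, ht₁, hft₁⟩ := hright s₀ ε hε
    refine ⟨min (s₀ - s₁) (t₁ - s₀), lt_min (by linarith) (by linarith), ?_⟩
    intro a ha
    rw [Real.dist_eq, abs_lt] at ha ⊢
    have hm1 := min_le_left (s₀ - s₁) (t₁ - s₀)
    have hm2 := min_le_right (s₀ - s₁) (t₁ - s₀)
    have h1 : s₁ < a := by linarith [ha.1]
    have h2 : a < t₁ := by linarith [ha.2]
    have h3 := hmono s₁ a h1
    have h4 := hmono a t₁ h2
    constructor <;> linarith
  have cp : Continuous p := cont_of p (fun s t h => (hpq s t h).1) left_p right_p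
  have cq : Continuous q := cont_of q (fun s t h => (hpq s t h).2) left_q right_q
  have heq : (fun s : ℝ => F (s, 0)) = fun s => ((p s + q s) / 2, (p s - q s) / 2) := by
    funext s
    refine Prod.ext ?_ ?_ <;> rw [hp s, hq s] <;> simp
  rw [heq]
  exact ((cp.add cq).div_const 2).prodMk ((cp.sub cq).div_const 2)
end

section
/- Let F : M₂ → M₂ be a C² function satisfying the M₂-holomorphy equations ∂₀F = σ·∂₁F whose restriction to the time axis vanishes: F(0 + y·(time direction)) = 0 for all y. Then F ≡ 0. Equivalently: if P, Q : ℝ² → ℝ are C² with ∂ₓP = ∂_yQ, ∂_yP = ∂ₓQ, and P(0,y) = Q(0,y) = 0 for all y, then P = Q = 0. -/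
/-!
Both `P + Q` and `P - Q` solve a first-order transport equation: the Cauchy–Riemann system
says exactly that `P + Q` is constant along the lines `x + y = const` and `P - Q` along the
lines `x - y = const`. Every such line meets the axis `x = 0`, where both vanish.
-/

/-- Partial derivative of a scalar field in the first coordinate. -/
noncomputable def pdx (f : ℝ × ℝ → ℝ) (p : ℝ × ℝ) : ℝ := deriv (fun x => f (x, p.2)) p.1

/-- Partial derivative of a scalar field in the second coordinate. -/
noncomputable def pdy (f : ℝ × ℝ → ℝ) (p : ℝ × ℝ) : ℝ := deriv (fun y => f (p.1, y)) p.2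

lemma pdx_eq_fderiv {f : ℝ × ℝ → ℝ} {p : ℝ × ℝ} (hf : DifferentiableAt ℝ f p) :
    pdx f p = fderiv ℝ f p (1, 0) := by
  have hline : HasDerivAt (fun x : ℝ => (x, p.2)) ((1 : ℝ), (0 : ℝ)) p.1 :=
    (hasDerivAt_id p.1).prodMk (hasDerivAt_const p.1 p.2)
  exact (hf.hasFDerivAt.comp_hasDerivAt p.1 hline).deriv

lemma pdy_eq_fderiv {f : ℝ × ℝ → ℝ} {p : ℝ × ℝ} (hf : DifferentiableAt ℝ f p) :
    pdy f p = fderiv ℝ f p (0, 1) := by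
  have hline : HasDerivAt (fun y : ℝ => (p.1, y)) ((0 : ℝ), (1 : ℝ)) p.2 :=
    (hasDerivAt_const p.2 p.1).prodMk (hasDerivAt_id p.2)
  exact (hf.hasFDerivAt.comp_hasDerivAt p.2 hline).deriv

lemma fderiv_apply_mk_eq_pdx_pdy {f : ℝ × ℝ → ℝ} {p : ℝ × ℝ} (hf : DifferentiableAt ℝ f p)
    (a b : ℝ) : fderiv ℝ f p (a, b) = a * pdx f p + b * pdy f p := by
  have hab : ((a, b) : ℝ × ℝ) = a • ((1 : ℝ), (0 : ℝ)) + b • ((0 : ℝ), (1 : ℝ)) := by simp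
  rw [hab, map_add, map_smul, map_smul, pdx_eq_fderiv hf, pdy_eq_fderiv hf, smul_eq_mul,
    smul_eq_mul]

lemma apply_add_smul_eq_of_fderiv_apply_eq_zero {E F : Type*} [NormedAddCommGroup E]
    [NormedSpace ℝ E] [NormedAddCommGroup F] [NormedSpace ℝ F] {f : E → F} {v : E}
    (hf : Differentiable ℝ f) (hv : ∀ q, fderiv ℝ f q v = 0) (p : E) (t : ℝ) :
    f (p + t • v) = f p := by
  have hderiv : ∀ s : ℝ, HasDerivAt (fun s => f (p + s • v)) 0 s := by
    intro s
    have hline : HasDerivAt (fun s : ℝ => p + s • v) v s := by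
      simpa using ((hasDerivAt_id s).smul_const v).const_add p
    have hcomp := (hf _).hasFDerivAt.comp_hasDerivAt s hline
    rwa [hv] at hcomp
  simpa using is_const_of_deriv_eq_zero (fun s => (hderiv s).differentiableAt)
    (fun s => (hderiv s).deriv) t 0

lemma eq_zero_of_fderiv_apply_one_mk_eq_zero {F : Type*} [NormedAddCommGroup F]
    [NormedSpace ℝ F] {f : ℝ × ℝ → F} {c : ℝ} (hf : Differentiable ℝ f)
    (hc : ∀ q, fderiv ℝ f q (1, c) = 0) (haxis : ∀ y, f (0, y) = 0) (p : ℝ × ℝ) : f p = 0 := by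
  have hp : ((0 : ℝ), p.2 - c * p.1) + p.1 • ((1 : ℝ), c) = p := by
    ext <;> simp [mul_comm]
  rw [← hp, apply_add_smul_eq_of_fderiv_apply_eq_zero hf hc, haxis]

/-- A C² solution of the M₂-Cauchy-Riemann system vanishing on the axis x = 0
vanishes identically. -/
theorem holomorphic_vanishing_on_axis (P Q : ℝ × ℝ → ℝ)
    (hP : ContDiff ℝ 2 P) (hQ : ContDiff ℝ 2 Q)
    (h1 : ∀ p, pdx P p = pdy Q p) (h2 : ∀ p, pdy P p = pdx Q p)
    (haxis : ∀ y : ℝ, P (0, y) = 0 ∧ Q (0, y) = 0) :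
    ∀ p : ℝ × ℝ, P p = 0 ∧ Q p = 0 := by
  have hPd : Differentiable ℝ P := hP.differentiable (by norm_num)
  have hQd : Differentiable ℝ Q := hQ.differentiable (by norm_num)
  have hsum : ∀ p, P p + Q p = 0 := by
    refine eq_zero_of_fderiv_apply_one_mk_eq_zero (c := -1) (hPd.add hQd) (fun q => ?_)
      (fun y => by simp [haxis])
    rw [fderiv_fun_add (hPd q) (hQd q), add_apply,
      fderiv_apply_mk_eq_pdx_pdy (hPd q), fderiv_apply_mk_eq_pdx_pdy (hQd q), h1, h2]
    ring
  have hdiff : ∀ p, P p - Q p = 0 := by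
    refine eq_zero_of_fderiv_apply_one_mk_eq_zero (c := 1) (hPd.sub hQd) (fun q => ?_)
      (fun y => by simp [haxis])
    rw [fderiv_fun_sub (hPd q) (hQd q), sub_apply,
      fderiv_apply_mk_eq_pdx_pdy (hPd q), fderiv_apply_mk_eq_pdx_pdy (hQd q), h1, h2]
    ring
  exact fun p => ⟨by linarith [hsum p, hdiff p], by linarith [hsum p, hdiff p]⟩
end

section
/- Two C² causal automorphisms of M₂ that agree on the time axis and are both orientation preserving are equal. Concretely: if F₁, F₂ : M₂ → M₂ are C², satisfy ∂₀Fᵢ = σ·∂₁Fᵢ, and F₁(s,0) = F₂(s,0) for all s, then F₁ = F₂. -/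
/-!
The difference `G = (P, Q)` of the two maps again satisfies `∂ₜP = ∂ₓQ`, `∂ₜQ = ∂ₓP`, so `P + Q`
has vanishing derivative along `(1, -1)` and `P - Q` along `(1, 1)`: both are constant on the
characteristic lines `t ± x = const`. Every such line meets the time axis, where `G` vanishes.
-/

theorem apply_add_smul_eq_of_fderiv_apply_eq_zero_s15 {E F : Type*} [NormedAddCommGroup E]
    [NormedSpace ℝ E] [NormedAddCommGroup F] [NormedSpace ℝ F] {h : E → F}
    (hh : Differentiable ℝ h) {c : E} (hc : ∀ p, fderiv ℝ h p c = 0) (p : E) (r : ℝ) :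
    h (p + r • c) = h p := by
  have hline : ∀ t : ℝ, HasDerivAt (fun t : ℝ => h (p + t • c)) 0 t := fun t => by
    simpa [hc, Function.comp_def] using (hh _).hasFDerivAt.comp_hasDerivAt t
      (((hasDerivAt_id t).smul_const c).const_add p)
  simpa using is_const_of_deriv_eq_zero (fun t => (hline t).differentiableAt)
    (fun t => (hline t).deriv) r 0

theorem pd0_eq_fderiv {F : ℝ × ℝ → ℝ × ℝ} {p : ℝ × ℝ} (hF : DifferentiableAt ℝ F p) :
    pd0 F p = fderiv ℝ F p (1, 0) :=
  (hF.hasFDerivAt.comp_hasDerivAt p.1 ((hasDerivAt_id p.1).prodMk (hasDerivAt_const _ _))).deriv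

theorem pd1_eq_fderiv {F : ℝ × ℝ → ℝ × ℝ} {p : ℝ × ℝ} (hF : DifferentiableAt ℝ F p) :
    pd1 F p = fderiv ℝ F p (0, 1) :=
  (hF.hasFDerivAt.comp_hasDerivAt p.2 ((hasDerivAt_const _ _).prodMk (hasDerivAt_id p.2))).deriv

def IsM2Holomorphic (F : ℝ × ℝ → ℝ × ℝ) : Prop :=
  Differentiable ℝ F ∧ ∀ p, fderiv ℝ F p (1, 0) = (fderiv ℝ F p (0, 1)).swap

namespace IsM2Holomorphic

theorem of_pd {F : ℝ × ℝ → ℝ × ℝ} (hF : Differentiable ℝ F)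
    (hol : ∀ p, pd0 F p = (pd1 F p).swap) : IsM2Holomorphic F :=
  ⟨hF, fun p => by rw [← pd0_eq_fderiv (hF p), ← pd1_eq_fderiv (hF p), hol]⟩

theorem sub {F G : ℝ × ℝ → ℝ × ℝ} (hF : IsM2Holomorphic F) (hG : IsM2Holomorphic G) :
    IsM2Holomorphic (F - G) :=
  ⟨hF.1.sub hG.1, fun p => by
    simp only [fderiv_sub (hF.1 p) (hG.1 p), sub_apply, hF.2, hG.2, Prod.swap_sub]⟩

theorem eq_zero_of_eq_zero_on_axis {G : ℝ × ℝ → ℝ × ℝ} (hG : IsM2Holomorphic G)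
    (haxis : ∀ s : ℝ, G (s, 0) = 0) : G = 0 := by
  obtain ⟨hd, hol⟩ := hG
  set Lsum : ℝ × ℝ →L[ℝ] ℝ := .fst ℝ ℝ ℝ + .snd ℝ ℝ ℝ
  set Ldiff : ℝ × ℝ →L[ℝ] ℝ := .fst ℝ ℝ ℝ - .snd ℝ ℝ ℝ
  have hderiv : ∀ (L : ℝ × ℝ →L[ℝ] ℝ) p c, fderiv ℝ (L ∘ G) p c = L (fderiv ℝ G p c) :=
    fun L p c => by rw [(L.hasFDerivAt.comp p (hd p).hasFDerivAt).fderiv]; rfl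
  have hu : ∀ p, fderiv ℝ (Lsum ∘ G) p (1, -1) = 0 := fun p => by
    have : ((1 : ℝ), (-1 : ℝ)) = (1, 0) - (0, 1) := by simp
    rw [hderiv, this, map_sub, hol]
    simp [Lsum]
  have hv : ∀ p, fderiv ℝ (Ldiff ∘ G) p (1, 1) = 0 := fun p => by
    have : ((1 : ℝ), (1 : ℝ)) = (1, 0) + (0, 1) := by simp
    rw [hderiv, this, map_add, hol]
    simp [Ldiff, add_comm]
  funext ⟨t, x⟩
  have hu' :=
    apply_add_smul_eq_of_fderiv_apply_eq_zero_s15 (Lsum.differentiable.comp hd) hu (t, x) x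
  have hv' :=
    apply_add_smul_eq_of_fderiv_apply_eq_zero_s15 (Ldiff.differentiable.comp hd) hv (t, x) (-x)
  have hxu : ((t, x) : ℝ × ℝ) + x • ((1 : ℝ), (-1 : ℝ)) = (t + x, 0) := by ext <;> simp
  have hxv : ((t, x) : ℝ × ℝ) + (-x) • ((1 : ℝ), (1 : ℝ)) = (t - x, 0) := by
    ext <;> simp [sub_eq_add_neg]
  simp only [hxu, hxv, Function.comp_apply, haxis, map_zero, Lsum, Ldiff, add_apply, sub_apply,
    ContinuousLinearMap.coe_fst', ContinuousLinearMap.coe_snd'] at hu' hv'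
  ext <;> simp only [Pi.zero_apply, Prod.fst_zero, Prod.snd_zero] <;> linarith

end IsM2Holomorphic

/-- Two C² M₂-holomorphic maps agreeing on the time axis are equal. -/
theorem holomorphic_eq_of_eq_on_axis (F₁ F₂ : ℝ × ℝ → ℝ × ℝ)
    (h₁ : ContDiff ℝ 2 F₁) (h₂ : ContDiff ℝ 2 F₂)
    (hol₁ : ∀ p, pd0 F₁ p = ((pd1 F₁ p).2, (pd1 F₁ p).1))
    (hol₂ : ∀ p, pd0 F₂ p = ((pd1 F₂ p).2, (pd1 F₂ p).1))
    (haxis : ∀ s : ℝ, F₁ (s, 0) = F₂ (s, 0)) :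
    F₁ = F₂ := by
  have H₁ := IsM2Holomorphic.of_pd (h₁.differentiable (by norm_num)) hol₁
  have H₂ := IsM2Holomorphic.of_pd (h₂.differentiable (by norm_num)) hol₂
  exact sub_eq_zero.1 ((H₁.sub H₂).eq_zero_of_eq_zero_on_axis fun s => sub_eq_zero.2 (haxis s))
end

section
/- For the uniformly accelerated observer γ(s) = (c²/a)·exp((a s/c²)σ)·σ in the split-complex algebra, the Märzke-Wheeler map is Ω_γ(z) = (c²/a)·exp((a z/c²)σ)·σ for all z ∈ M₂. -/
/-- The uniformly accelerated observer γ(s) = (c²/a)·exp((as/c²)σ)·σ, in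
(time, space) coordinates: γ(s) = ((c²/a)·sinh(as/c²), (c²/a)·cosh(as/c²)). -/
noncomputable def accObs (a c : ℝ) (s : ℝ) : ℝ × ℝ :=
  (c ^ 2 / a * Real.sinh (a * s / c ^ 2), c ^ 2 / a * Real.cosh (a * s / c ^ 2))

/-- The Märzke-Wheeler map of the uniformly accelerated observer is
Ω_γ(z) = (c²/a)·exp((az/c²)σ)·σ; at z = s + xσ this equals
(c²/a)·e^{ax/c²}·(sinh(as/c²) + cosh(as/c²)σ). -/
theorem omega_accObs (a c : ℝ) (ha : 0 < a) (hc : 0 < c) (s x : ℝ) :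
    Omega (accObs a c) (s, x) =
      (c ^ 2 / a * Real.exp (a * x / c ^ 2) * Real.sinh (a * s / c ^ 2),
       c ^ 2 / a * Real.exp (a * x / c ^ 2) * Real.cosh (a * s / c ^ 2)) := by
  have h1 : a * (s + x) / c ^ 2 = a * s / c ^ 2 + a * x / c ^ 2 := by ring
  have h2 : a * (s - x) / c ^ 2 = a * s / c ^ 2 - a * x / c ^ 2 := by ring
  simp only [Omega, accObs, h1, h2, Real.sinh_add, Real.cosh_add, Real.sinh_sub,
    Real.cosh_sub, Prod.mk.injEq]
  rw [← Real.cosh_add_sinh (a * x / c ^ 2)]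
  constructor <;> ring
end

section
/- For the uniformly accelerated observer γ(s) = (c²/a)·exp((as/c²)σ)·σ, the conformal factor of its Märzke-Wheeler map at the point s + xσ is |DΩ_γ|_L(s + xσ) = exp(ax/c²), i.e., |∂₀Ω_γ(s + xσ)|²_L = exp(2ax/c²). -/
/-!
Ω_γ is linear in the values of γ, so `∂₀Ω_γ = Ω_{γ'}`. In light-cone coordinates the Minkowski
form of `Ω_δ(s + xσ)` is the product of the `+` component of `δ(s + x)` and the `−` component of
`δ(s − x)`. The velocity of the accelerated observer is `cosh(at/c²) + sinh(at/c²)σ = exp((at/c²)σ)`,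
whose light-cone components are `exp(± at/c²)`, so the product is
`exp(a(s + x)/c²) · exp(−a(s − x)/c²) = exp(2ax/c²)`.
-/

section ProdComponents

variable {𝕜 E F : Type*} [NontriviallyNormedField 𝕜] [NormedAddCommGroup E] [NormedSpace 𝕜 E]
  [NormedAddCommGroup F] [NormedSpace 𝕜 F] {f : 𝕜 → E × F} {f' : E × F} {t : 𝕜}

theorem HasDerivAt.fst (h : HasDerivAt f f' t) : HasDerivAt (fun t => (f t).1) f'.1 t :=
  (ContinuousLinearMap.fst 𝕜 E F).hasFDerivAt.comp_hasDerivAt t h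

theorem HasDerivAt.snd (h : HasDerivAt f f' t) : HasDerivAt (fun t => (f t).2) f'.2 t :=
  (ContinuousLinearMap.snd 𝕜 E F).hasFDerivAt.comp_hasDerivAt t h

end ProdComponents

theorem hasDerivAt_Omega_fst {γ γ' : ℝ → ℝ × ℝ} {s x : ℝ}
    (hplus : HasDerivAt γ (γ' (s + x)) (s + x)) (hminus : HasDerivAt γ (γ' (s - x)) (s - x)) :
    HasDerivAt (fun s' => Omega γ (s', x)) (Omega γ' (s, x)) s := by
  have hP := hplus.comp_add_const s x
  have hM := hminus.comp_sub_const s x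
  exact (((hP.fst.div_const 2).add (hM.fst.div_const 2)).add
      ((hP.snd.div_const 2).sub (hM.snd.div_const 2))).prodMk
    (((hP.snd.div_const 2).add (hM.snd.div_const 2)).add
      ((hP.fst.div_const 2).sub (hM.fst.div_const 2)))

theorem qL_Omega (δ : ℝ → ℝ × ℝ) (s x : ℝ) :
    qL (Omega δ (s, x)) = ((δ (s + x)).1 + (δ (s + x)).2) * ((δ (s - x)).1 - (δ (s - x)).2) := by
  simp only [qL, Omega]
  ring

noncomputable def accVel (a c t : ℝ) : ℝ × ℝ :=
  (Real.cosh (a * t / c ^ 2), Real.sinh (a * t / c ^ 2))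

theorem hasDerivAt_accObs {a c : ℝ} (ha : a ≠ 0) (hc : c ≠ 0) (t : ℝ) :
    HasDerivAt (accObs a c) (accVel a c t) t := by
  have hrapidity : HasDerivAt (fun t => a * t / c ^ 2) (a / c ^ 2) t := by
    simpa using ((hasDerivAt_id t).const_mul a).div_const (c ^ 2)
  have hscale : c ^ 2 / a * (a / c ^ 2) = 1 := by field_simp
  refine HasDerivAt.congr_deriv (f := accObs a c)
    ((((Real.hasDerivAt_sinh _).comp t hrapidity).const_mul (c ^ 2 / a)).prodMk
      (((Real.hasDerivAt_cosh _).comp t hrapidity).const_mul (c ^ 2 / a))) ?_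
  simp only [accVel, mul_left_comm (c ^ 2 / a), hscale, mul_one]

/-- The conformal factor of the Märzke-Wheeler map of the uniformly accelerated
observer: |∂₀Ω_γ(s + xσ)|²_L = exp(2ax/c²). -/
theorem conformal_factor_accObs (a c : ℝ) (ha : 0 < a) (hc : 0 < c) (s x : ℝ) :
    qL (deriv (fun s' => Omega (accObs a c) (s', x)) s) = Real.exp (2 * a * x / c ^ 2) := by
  have hγ := hasDerivAt_accObs ha.ne' hc.ne'
  rw [(hasDerivAt_Omega_fst (hγ _) (hγ _)).deriv, qL_Omega]
  simp only [accVel]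
  rw [Real.cosh_add_sinh, Real.cosh_sub_sinh, ← Real.exp_add]
  congr 1
  ring
end

section
/- The curve γ(s) = (c²/a)(sinh(as/c²) + cosh(as/c²)σ) in (time, space) coordinates is an observer: for all t > s, γ(t) − γ(s) is future-directed timelike. -/
lemma key (x y : ℝ) (h : x < y) : |Real.cosh y - Real.cosh x| < Real.sinh y - Real.sinh x := by
  rw [abs_lt]
  have h1 : Real.exp x < Real.exp y := Real.exp_lt_exp.2 h
  have h2 : Real.exp (-y) < Real.exp (-x) := Real.exp_lt_exp.2 (by linarith)
  constructor <;>
  · simp only [Real.sinh_eq, Real.cosh_eq] at *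
    linarith

/-- The uniformly accelerated curve γ(s) = ((c²/a)sinh(as/c²), (c²/a)cosh(as/c²))
is an observer: chords are future-directed timelike. -/
theorem accObs_observer (a c : ℝ) (ha : 0 < a) (hc : 0 < c) (s t : ℝ) (h : s < t) :
    FDT ((c ^ 2 / a * Real.sinh (a * t / c ^ 2), c ^ 2 / a * Real.cosh (a * t / c ^ 2))
      - (c ^ 2 / a * Real.sinh (a * s / c ^ 2), c ^ 2 / a * Real.cosh (a * s / c ^ 2))) := by
  have hc2 : (0:ℝ) < c ^ 2 := by positivity
  have hk : (0:ℝ) < c ^ 2 / a := by positivity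
  have harg : a * s / c ^ 2 < a * t / c ^ 2 := by gcongr
  have hkey := key _ _ harg
  simp only [FDT, Prod.fst_sub, Prod.snd_sub]
  rw [show c ^ 2 / a * Real.cosh (a * t / c ^ 2) - c ^ 2 / a * Real.cosh (a * s / c ^ 2)
      = c ^ 2 / a * (Real.cosh (a * t / c ^ 2) - Real.cosh (a * s / c ^ 2)) by ring,
    abs_mul, abs_of_pos hk]
  nlinarith [abs_nonneg (Real.cosh (a * t / c ^ 2) - Real.cosh (a * s / c ^ 2))]
end

section
/- If γ is a C¹ curve in M₂ with γ'(s) future-directed timelike for every s (i.e., the time component of γ'(s) strictly exceeds the absolute value of the space component), then for all t > s the difference γ(t) − γ(s) is future-directed timelike; hence γ is an observer. -/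
theorem fdt_iff_lightCone_pos (v : ℝ × ℝ) : FDT v ↔ 0 < v.1 - v.2 ∧ 0 < v.1 + v.2 := by
  rw [FDT, abs_lt]
  constructor <;> rintro ⟨h₁, h₂⟩ <;> constructor <;> linarith

theorem ContinuousLinearMap.pos_apply_sub_of_pos_apply_deriv {E : Type*}
    [NormedAddCommGroup E] [NormedSpace ℝ E] (L : E →L[ℝ] ℝ) {γ : ℝ → E}
    (hγ : Differentiable ℝ γ) (hpos : ∀ x, 0 < L (deriv γ x)) {s t : ℝ} (hst : s < t) :
    0 < L (γ t - γ s) := by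
  have hmono : StrictMono fun x => L (γ x) := strictMono_of_deriv_pos fun x => by
    have hL : HasDerivAt (fun x => L (γ x)) (L (deriv γ x)) x :=
      L.hasFDerivAt.comp_hasDerivAt x (hγ x).hasDerivAt
    exact hL.deriv ▸ hpos x
  rw [map_sub, sub_pos]
  exact hmono hst

/-- A C¹ curve whose derivative is everywhere future-directed timelike has all its
chords future-directed timelike; hence it is an observer. -/
theorem timelike_curve_is_observer (γ : ℝ → ℝ × ℝ) (hγ : ContDiff ℝ 1 γ)
    (hder : ∀ s : ℝ, FDT (deriv γ s)) :
    ∀ s t : ℝ, s < t → FDT (γ t - γ s) := by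
  intro s t hst
  have hdiff : Differentiable ℝ γ := hγ.differentiable one_ne_zero
  have hcone := fun x => (fdt_iff_lightCone_pos (deriv γ x)).1 (hder x)
  have hminus := (ContinuousLinearMap.fst ℝ ℝ ℝ - ContinuousLinearMap.snd ℝ ℝ ℝ)
    |>.pos_apply_sub_of_pos_apply_deriv hdiff (fun x => by simpa using (hcone x).1) hst
  have hplus := (ContinuousLinearMap.fst ℝ ℝ ℝ + ContinuousLinearMap.snd ℝ ℝ ℝ)
    |>.pos_apply_sub_of_pos_apply_deriv hdiff (fun x => by simpa using (hcone x).2) hst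
  simp only [sub_apply, add_apply, ContinuousLinearMap.coe_fst', ContinuousLinearMap.coe_snd']
    at hminus hplus
  exact (fdt_iff_lightCone_pos _).2 ⟨hminus, hplus⟩
end
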